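/- For all k ≥ 0, s(2^k) = 2^⌊(k+1)/2⌋ + 1 and s(2^k − 1) = 2^⌊(k+1)/2⌋; for all k ≥ 1, s(2^k − 2) = 2^⌊(k+1)/2⌋ + (−1)^k. -/

import Mathlib

/-!
Pairing the terms `2i` and `2i + 1` gives `s (2n+1) = s n + t n` and `t (2n+1) = s n - t n`,
so `(s, t)` at `2^k - 1` evolves by the matrix `[[1, 1], [1, -1]]`, whose square is `2`.
Starting from `(1, 1)` at `k = 0` this gives `(2^j, 2^j)` at `k = 2j` and `(2^(j+1), 0)` at
`k = 2j + 1`. The values at `2^k` and `2^k - 2` differ from `s (2^k - 1)` by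
`rs (2^k) = 1` and `rs (2^k - 1) = (-1)^(k-1)`.
-/

def rs : ℕ → ℤ
  | 0 => 1
  | (n+1) =>
    if (n+1) % 2 = 0 then rs ((n+1)/2)
    else (-1)^((n+1)/2) * rs ((n+1)/2)
decreasing_by all_goals exact Nat.div_lt_self (Nat.succ_pos n) (by norm_num)

def s (n : ℕ) : ℤ := ∑ i ∈ Finset.range (n+1), rs i

def t (n : ℕ) : ℤ := ∑ i ∈ Finset.range (n+1), (-1)^i * rs i

open Finset

theorem Finset.sum_range_two_mul {M : Type*} [AddCommMonoid M] (f : ℕ → M) (n : ℕ) :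
    ∑ i ∈ range (2 * n), f i = ∑ i ∈ range n, (f (2 * i) + f (2 * i + 1)) := by
  induction n with
  | zero => simp
  | succ n ih => rw [Nat.mul_succ, sum_range_succ, sum_range_succ, sum_range_succ, ih, add_assoc]

lemma rs_zero : rs 0 = 1 := by simp [rs]

lemma rs_two_mul (n : ℕ) : rs (2 * n) = rs n := by
  cases n with
  | zero => rfl
  | succ m =>
    rw [show 2 * (m + 1) = (2 * m + 1) + 1 by ring, rs]
    simp [show (2 * m + 1 + 1) % 2 = 0 by omega, show (2 * m + 1 + 1) / 2 = m + 1 by omega]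

lemma rs_two_mul_add_one (n : ℕ) : rs (2 * n + 1) = (-1) ^ n * rs n := by
  rw [rs]
  simp [show (2 * n + 1) / 2 = n by omega]

lemma rs_one : rs 1 = 1 := by
  simpa [rs_zero] using rs_two_mul_add_one 0

lemma rs_two_pow (k : ℕ) : rs (2 ^ k) = 1 := by
  induction k with
  | zero => exact rs_one
  | succ k ih => rw [pow_succ', rs_two_mul, ih]

lemma two_pow_succ_sub_one (k : ℕ) : 2 ^ (k + 1) - 1 = 2 * (2 ^ k - 1) + 1 := by
  have := Nat.one_le_two_pow (n := k)
  rw [pow_succ']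
  omega

lemma rs_two_pow_succ_sub_one (k : ℕ) : rs (2 ^ (k + 1) - 1) = (-1) ^ k := by
  induction k with
  | zero => exact rs_one
  | succ k ih =>
    have hodd : (-1 : ℤ) ^ (2 ^ (k + 1) - 1) = -1 := Odd.neg_one_pow ⟨_, two_pow_succ_sub_one k⟩
    rw [two_pow_succ_sub_one, rs_two_mul_add_one, ih, hodd, pow_succ]
    ring

lemma s_eq_s_sub_one_add {n : ℕ} (hn : n ≠ 0) : s n = s (n - 1) + rs n := by
  obtain ⟨m, rfl⟩ := Nat.exists_eq_succ_of_ne_zero hn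
  exact sum_range_succ _ _

lemma s_two_mul_add_one (n : ℕ) : s (2 * n + 1) = s n + t n := by
  rw [s, show 2 * n + 1 + 1 = 2 * (n + 1) by ring, sum_range_two_mul, s, t, ← sum_add_distrib]
  simp only [rs_two_mul, rs_two_mul_add_one]

lemma t_two_mul_add_one (n : ℕ) : t (2 * n + 1) = s n - t n := by
  rw [t, show 2 * n + 1 + 1 = 2 * (n + 1) by ring, sum_range_two_mul, s, t, ← sum_sub_distrib]
  refine sum_congr rfl fun i _ => ?_
  rw [rs_two_mul, rs_two_mul_add_one, pow_succ, pow_mul]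
  ring

lemma s_t_two_pow_succ_sub_one (k : ℕ) :
    s (2 ^ (k + 1) - 1) = s (2 ^ k - 1) + t (2 ^ k - 1) ∧
      t (2 ^ (k + 1) - 1) = s (2 ^ k - 1) - t (2 ^ k - 1) := by
  rw [two_pow_succ_sub_one]
  exact ⟨s_two_mul_add_one _, t_two_mul_add_one _⟩

lemma s_t_two_pow_even_sub_one (j : ℕ) :
    s (2 ^ (2 * j) - 1) = 2 ^ j ∧ t (2 ^ (2 * j) - 1) = 2 ^ j := by
  induction j with
  | zero => simp [s, t, rs_zero]
  | succ j ih =>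
    obtain ⟨hs₁, ht₁⟩ := s_t_two_pow_succ_sub_one (2 * j)
    obtain ⟨hs₂, ht₂⟩ := s_t_two_pow_succ_sub_one (2 * j + 1)
    rw [show 2 * (j + 1) = 2 * j + 1 + 1 by ring, hs₂, ht₂, hs₁, ht₁, ih.1, ih.2, pow_succ]
    constructor <;> ring

lemma s_two_pow_sub_one (k : ℕ) : s (2 ^ k - 1) = 2 ^ ((k + 1) / 2) := by
  obtain ⟨j, rfl | rfl⟩ := Nat.even_or_odd' k
  · rw [(s_t_two_pow_even_sub_one j).1, show (2 * j + 1) / 2 = j by omega]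
  · rw [(s_t_two_pow_succ_sub_one (2 * j)).1, (s_t_two_pow_even_sub_one j).1,
      (s_t_two_pow_even_sub_one j).2, show (2 * j + 1 + 1) / 2 = j + 1 by omega, pow_succ]
    ring

theorem stmt13 : (∀ k : ℕ, s (2^k) = 2^((k+1)/2) + 1) ∧
    (∀ k : ℕ, s (2^k - 1) = 2^((k+1)/2)) ∧
    (∀ k : ℕ, 1 ≤ k → s (2^k - 2) = 2^((k+1)/2) + (-1)^k) := by
  refine ⟨fun k => ?_, s_two_pow_sub_one, fun k hk => ?_⟩
  · rw [s_eq_s_sub_one_add (Nat.two_pow_pos k).ne', s_two_pow_sub_one, rs_two_pow]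
  · obtain ⟨j, rfl⟩ := Nat.exists_eq_add_of_le' hk
    have h2 : 2 ≤ 2 ^ (j + 1) := Nat.le_self_pow (Nat.succ_ne_zero j) 2
    have h := s_eq_s_sub_one_add (n := 2 ^ (j + 1) - 1) (by omega)
    rw [s_two_pow_sub_one, rs_two_pow_succ_sub_one,
      show 2 ^ (j + 1) - 1 - 1 = 2 ^ (j + 1) - 2 by omega] at h
    rw [pow_succ (-1 : ℤ)]
    linarith
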